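/- Positive maps applied to the maximally entangled state yield entanglement witnesses (the nonnegativity half of Eq. (16) of the paper). Let ι be a nonempty finite type with d = card ι, and let Λ : Matrix ι ι ℂ →ₗ[ℂ] Matrix ι ι ℂ be a positive linear map, i.e. Λ(A) is positive semidefinite whenever A is positive semidefinite. Then for all positive semidefinite A, B ∈ Matrix ι ι ℂ, the trace Tr( ((1⊗Λ)(φ⁺)) · (A ⊗ B) ) is a nonnegative real number (explicitly it equals (1/d)·Tr(Λ(Aᵀ)·B)); consequently Re Tr( ((1⊗Λ)(φ⁺)) · σ ) ≥ 0 for every separable σ ∈ Matrix (ι×ι) (ι×ι) ℂ. -/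

import Mathlib

open Matrix Kronecker ComplexOrder

/-- The maximally entangled state `φ⁺ = |φ₊⟩⟨φ₊|` on `ℂ^d ⊗ ℂ^d`. -/
noncomputable def phiPlus (ι : Type*) [Fintype ι] [DecidableEq ι] :
    Matrix (ι × ι) (ι × ι) ℂ :=
  fun p q => if p.1 = p.2 ∧ q.1 = q.2 then (1 : ℂ) / (Fintype.card ι : ℂ) else 0

/-- The map `1 ⊗ Λ` acting blockwise on a bipartite matrix:
`((1⊗Λ)(M))_{(i,a),(j,b)} = (Λ(M^{(i,j)}))_{a b}` where `(M^{(i,j)})_{a b} = M_{(i,a),(j,b)}`. -/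
noncomputable def oneTensor {ι : Type*} [Fintype ι] [DecidableEq ι]
    (Λ : Matrix ι ι ℂ →ₗ[ℂ] Matrix ι ι ℂ) (M : Matrix (ι × ι) (ι × ι) ℂ) :
    Matrix (ι × ι) (ι × ι) ℂ :=
  fun p q => (Λ (fun a b => M (p.1, a) (q.1, b))) p.2 q.2

/-- A bipartite matrix is separable if it is a finite sum of Kronecker products of
positive semidefinite matrices. -/
def SeparableState {ι : Type*} [Fintype ι]
    (σ : Matrix (ι × ι) (ι × ι) ℂ) : Prop :=
  ∃ (n : ℕ) (A : Fin n → Matrix ι ι ℂ) (B : Fin n → Matrix ι ι ℂ),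
    (∀ k, (A k).PosSemidef) ∧ (∀ k, (B k).PosSemidef) ∧ σ = ∑ k, (A k) ⊗ₖ (B k)

/-!
The (i, j) block of `(1 ⊗ Λ) φ⁺` is `Λ(E_ij) / d`, so by linearity of `Λ` and of the trace,
pairing it with `A ⊗ B` gives `tr(Λ(Aᵀ) B) / d`. Since `Aᵀ` is positive semidefinite, so is
`Λ(Aᵀ)`, and the trace of a product of two positive semidefinite matrices is nonnegative
(write `B = X⋆X` and cycle to `tr(X Λ(Aᵀ) X⋆)`). A separable state is a sum of such products.
-/

open scoped MatrixOrder in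
theorem Matrix.PosSemidef.trace_mul_nonneg {𝕜 n : Type*} [RCLike 𝕜] [Fintype n]
    {M N : Matrix n n 𝕜} (hM : M.PosSemidef) (hN : N.PosSemidef) : 0 ≤ (M * N).trace := by
  classical
  obtain ⟨X, rfl⟩ := CStarAlgebra.nonneg_iff_eq_star_mul_self.mp hN.nonneg
  rw [star_eq_conjTranspose, ← Matrix.mul_assoc, trace_mul_cycle]
  exact (hM.mul_mul_conjTranspose_same X).trace_nonneg

theorem Matrix.trace_mul_kronecker {R m n : Type*} [CommSemiring R] [Fintype m] [Fintype n]
    (W : Matrix (m × n) (m × n) R) (A : Matrix m m R) (B : Matrix n n R) :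
    (W * (A ⊗ₖ B)).trace = ∑ i, ∑ j, A j i * ((comp m m n n R).symm W i j * B).trace := by
  simp only [trace, diag, mul_apply, Fintype.sum_prod_type, kroneckerMap_apply, Finset.mul_sum]
  refine Finset.sum_congr rfl fun i _ => ?_
  rw [Finset.sum_comm]
  exact Finset.sum_congr rfl fun _ _ => Finset.sum_congr rfl fun _ _ =>
    Finset.sum_congr rfl fun _ _ => mul_left_comm _ _ _

theorem LinearMap.apply_eq_sum_single {R M m n : Type*} [CommSemiring R] [AddCommMonoid M]
    [Module R M] [Fintype m] [Fintype n] [DecidableEq m] [DecidableEq n]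
    (f : Matrix m n R →ₗ[R] M) (A : Matrix m n R) :
    f A = ∑ i, ∑ j, A i j • f (Matrix.single i j 1) := by
  conv_lhs => rw [matrix_eq_sum_single A]
  simp only [map_sum, ← map_smul, smul_single, smul_eq_mul, mul_one]

theorem comp_symm_oneTensor {ι : Type*} [Fintype ι] [DecidableEq ι]
    (Λ : Matrix ι ι ℂ →ₗ[ℂ] Matrix ι ι ℂ) (M : Matrix (ι × ι) (ι × ι) ℂ) (i j : ι) :
    (comp ι ι ι ι ℂ).symm (oneTensor Λ M) i j = Λ ((comp ι ι ι ι ℂ).symm M i j) :=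
  rfl

theorem comp_symm_phiPlus {ι : Type*} [Fintype ι] [DecidableEq ι] (i j : ι) :
    (comp ι ι ι ι ℂ).symm (phiPlus ι) i j = (1 / (Fintype.card ι : ℂ)) • single i j 1 := by
  ext a b
  show phiPlus ι (i, a) (j, b) = _
  simp [phiPlus, single_apply]

theorem trace_oneTensor_phiPlus_mul_kronecker {ι : Type*} [Fintype ι] [DecidableEq ι]
    (Λ : Matrix ι ι ℂ →ₗ[ℂ] Matrix ι ι ℂ) (A B : Matrix ι ι ℂ) :
    (oneTensor Λ (phiPlus ι) * (A ⊗ₖ B)).trace =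
      ((1 : ℂ) / (Fintype.card ι : ℂ)) * ((Λ Aᵀ) * B).trace := by
  let f := traceLinearMap ι ℂ ℂ ∘ₗ LinearMap.mulRight ℂ B ∘ₗ Λ
  have hf : ((Λ Aᵀ) * B).trace = f Aᵀ := rfl
  rw [trace_mul_kronecker, hf, f.apply_eq_sum_single, Finset.mul_sum]
  refine Finset.sum_congr rfl fun i _ => ?_
  rw [Finset.mul_sum]
  refine Finset.sum_congr rfl fun j _ => ?_
  rw [comp_symm_oneTensor, comp_symm_phiPlus, map_smul, smul_mul, trace_smul]
  simp only [one_div, smul_eq_mul, transpose_apply, LinearMap.coe_comp, Function.comp_apply,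
    LinearMap.mulRight_apply, traceLinearMap_apply, f]
  ring

def IsBlockPositive {ι : Type*} [Fintype ι] (W : Matrix (ι × ι) (ι × ι) ℂ) : Prop :=
  ∀ A B : Matrix ι ι ℂ, A.PosSemidef → B.PosSemidef → 0 ≤ (W * (A ⊗ₖ B)).trace

theorem IsBlockPositive.trace_mul_nonneg {ι : Type*} [Fintype ι]
    {W σ : Matrix (ι × ι) (ι × ι) ℂ} (hW : IsBlockPositive W) (hσ : SeparableState σ) :
    0 ≤ (W * σ).trace := by
  obtain ⟨n, A, B, hA, hB, rfl⟩ := hσ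
  rw [Finset.mul_sum, trace_sum]
  exact Finset.sum_nonneg fun k _ => hW _ _ (hA k) (hB k)

theorem isBlockPositive_oneTensor_phiPlus {ι : Type*} [Fintype ι] [DecidableEq ι]
    {Λ : Matrix ι ι ℂ →ₗ[ℂ] Matrix ι ι ℂ}
    (hΛ : ∀ A : Matrix ι ι ℂ, A.PosSemidef → (Λ A).PosSemidef) :
    IsBlockPositive (oneTensor Λ (phiPlus ι)) := by
  intro A B hA hB
  rw [trace_oneTensor_phiPlus_mul_kronecker]
  exact mul_nonneg (by positivity) ((hΛ _ hA.transpose).trace_mul_nonneg hB)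

theorem positive_map_phiPlus_is_witness_general
    {ι : Type*} [Fintype ι] [DecidableEq ι]
    (Λ : Matrix ι ι ℂ →ₗ[ℂ] Matrix ι ι ℂ)
    (hΛ : ∀ A : Matrix ι ι ℂ, A.PosSemidef → (Λ A).PosSemidef) :
    (∀ A B : Matrix ι ι ℂ, A.PosSemidef → B.PosSemidef →
      (oneTensor Λ (phiPlus ι) * (A ⊗ₖ B)).trace =
        ((1 : ℂ) / (Fintype.card ι : ℂ)) * ((Λ Aᵀ) * B).trace ∧
      0 ≤ ((oneTensor Λ (phiPlus ι) * (A ⊗ₖ B)).trace).re ∧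
      ((oneTensor Λ (phiPlus ι) * (A ⊗ₖ B)).trace).im = 0) ∧
    (∀ σ : Matrix (ι × ι) (ι × ι) ℂ, SeparableState σ →
      0 ≤ ((oneTensor Λ (phiPlus ι) * σ).trace).re) := by
  have hW := isBlockPositive_oneTensor_phiPlus hΛ
  refine ⟨fun A B hA hB ↦ ?_, fun σ hσ ↦ (Complex.nonneg_iff.mp (hW.trace_mul_nonneg hσ)).1⟩
  obtain ⟨hre, him⟩ := Complex.nonneg_iff.mp (hW A B hA hB)
  exact ⟨trace_oneTensor_phiPlus_mul_kronecker Λ A B, hre, him.symm⟩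

/-- Positive maps applied to the maximally entangled state yield entanglement witnesses
(the nonnegativity half of Eq. (16)). -/
theorem positive_map_phiPlus_is_witness
    {ι : Type*} [Fintype ι] [DecidableEq ι] [Nonempty ι]
    (Λ : Matrix ι ι ℂ →ₗ[ℂ] Matrix ι ι ℂ)
    (hΛ : ∀ A : Matrix ι ι ℂ, A.PosSemidef → (Λ A).PosSemidef) :
    (∀ A B : Matrix ι ι ℂ, A.PosSemidef → B.PosSemidef →
      (oneTensor Λ (phiPlus ι) * (A ⊗ₖ B)).trace =
        ((1 : ℂ) / (Fintype.card ι : ℂ)) * ((Λ Aᵀ) * B).trace ∧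
      0 ≤ ((oneTensor Λ (phiPlus ι) * (A ⊗ₖ B)).trace).re ∧
      ((oneTensor Λ (phiPlus ι) * (A ⊗ₖ B)).trace).im = 0) ∧
    (∀ σ : Matrix (ι × ι) (ι × ι) ℂ, SeparableState σ →
      0 ≤ ((oneTensor Λ (phiPlus ι) * σ).trace).re) :=
  positive_map_phiPlus_is_witness_general Λ hΛ
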